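/- (Pessimistic transition model lower-bounds the value) Suppose the true transition kernel T satisfies, for all state-action pairs (s,a) on the support of d^π_{T̂}, ‖T(·|s,a) − T̂(·|s,a)‖₁ · R_max ≤ u_T(s,a). Then for any reward R̃ with returns bounded in [0, R_max] and any policy π, E_{τ ∼ d^π_{T̂}} [ R̃(τ) − Σ_{(s,a)∈τ} u_T(s,a) ] ≤ V^π_{T, R̃}. -/
import Mathlib


open Finset

variable {S A : Type*}

/-- Probability of a length-`H` trajectory (sequence of state-action pairs) under
policy `π`, transition kernel `T`, starting from initial state `s₀`. -/
noncomputable def trajProb [Fintype S] [Fintype A] [DecidableEq S]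
    (H : ℕ) (hH : 0 < H) (s₀ : S) (T : S → A → S → ℝ) (π : S → A → ℝ)
    (τ : Fin H → S × A) : ℝ :=
  (if (τ ⟨0, hH⟩).1 = s₀ then (1 : ℝ) else 0) *
    (∏ j, π (τ j).1 (τ j).2) *
    ∏ j : Fin (H - 1),
      T (τ (j.castLE (Nat.sub_le H 1))).1 (τ (j.castLE (Nat.sub_le H 1))).2
        (τ ⟨j.val + 1, by have := j.isLt; omega⟩).1

/-- Trajectory return: sum of per-step rewards. -/
def trajReward (H : ℕ) (R : S → A → ℝ) (τ : Fin H → S × A) : ℝ :=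
  ∑ j, R (τ j).1 (τ j).2

/-- L1 (total-variation style) distance between two kernels at `(s, a)`. -/
def tvDist [Fintype S] (T T' : S → A → S → ℝ) (s : S) (a : A) : ℝ :=
  ∑ s', |T s a s' - T' s a s'|

/-- Expected return of policy `π` under kernel `T` and reward `R`. -/
noncomputable def value [Fintype S] [Fintype A] [DecidableEq S] [DecidableEq A]
    (H : ℕ) (hH : 0 < H) (s₀ : S) (T : S → A → S → ℝ) (π : S → A → ℝ)
    (R : S → A → ℝ) : ℝ :=
  ∑ τ : Fin H → S × A, trajProb H hH s₀ T π τ * trajReward H R τ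

lemma trajProb_def [Fintype S] [Fintype A] [DecidableEq S]
    (H : ℕ) (hH : 0 < H + 1) (s₀ : S) (T : S → A → S → ℝ) (π : S → A → ℝ)
    (τ : Fin (H+1) → S × A) :
    trajProb (H+1) hH s₀ T π τ =
      (if (τ ⟨0, hH⟩).1 = s₀ then (1:ℝ) else 0) * (∏ j, π (τ j).1 (τ j).2) *
        ∏ j : Fin H, T (τ j.castSucc).1 (τ j.castSucc).2 (τ j.succ).1 := rfl

lemma sum_snoc {X : Type*} [Fintype X] (n : ℕ) (F : (Fin (n+1) → X) → ℝ) :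
    ∑ τ, F τ = ∑ τ' : Fin n → X, ∑ p, F (Fin.snoc τ' p) := by
  have h1 : ∑ τ, F τ = ∑ q : (Fin n → X) × X, F (Fin.snoc q.1 q.2) :=
    (Fintype.sum_equiv ⟨fun q => Fin.snoc q.1 q.2, fun f => (Fin.init f, f (Fin.last n)),
      fun q => by simp, fun f => by simp⟩ _ _ fun q => rfl).symm
  rw [h1]
  exact Fintype.sum_prod_type (f := fun q => F (Fin.snoc q.1 q.2))

lemma snoc_zero {n : ℕ} (τ' : Fin (n+1) → S × A) (p : S × A) (h : (0:ℕ) < n + 1 + 1) :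
    (Fin.snoc τ' p : Fin (n+1+1) → S × A) ⟨0, h⟩ = τ' ⟨0, Nat.succ_pos n⟩ := by
  have h2 : (⟨0, h⟩ : Fin (n+1+1)) = Fin.castSucc ⟨0, Nat.succ_pos n⟩ := rfl
  rw [h2, Fin.snoc_castSucc]

lemma trajProb_snoc [Fintype S] [Fintype A] [DecidableEq S]
    (H : ℕ) (hH : 0 < H + 1 + 1) (s₀ : S) (T : S → A → S → ℝ) (π : S → A → ℝ)
    (τ' : Fin (H+1) → S × A) (p : S × A) :
    trajProb (H+1+1) hH s₀ T π (Fin.snoc τ' p) =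
      trajProb (H+1) (Nat.succ_pos H) s₀ T π τ' *
        T (τ' (Fin.last H)).1 (τ' (Fin.last H)).2 p.1 * π p.1 p.2 := by
  rw [trajProb_def (H+1) hH, trajProb_def H (Nat.succ_pos H)]
  rw [Fin.prod_univ_castSucc (f := fun j : Fin (H+1+1) =>
    π ((Fin.snoc τ' p : Fin (H+1+1) → S × A) j).1 ((Fin.snoc τ' p : Fin (H+1+1) → S × A) j).2)]
  rw [Fin.prod_univ_castSucc (f := fun j : Fin (H+1) =>
    T ((Fin.snoc τ' p : Fin (H+1+1) → S × A) j.castSucc).1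
      ((Fin.snoc τ' p : Fin (H+1+1) → S × A) j.castSucc).2
      ((Fin.snoc τ' p : Fin (H+1+1) → S × A) j.succ).1)]
  simp only [Fin.snoc_castSucc, Fin.succ_castSucc, Fin.succ_last, Fin.snoc_last, snoc_zero]
  ring

lemma trajProb_nonneg [Fintype S] [Fintype A] [DecidableEq S]
    (H : ℕ) (hH : 0 < H) (s₀ : S) (T : S → A → S → ℝ) (π : S → A → ℝ)
    (hT : ∀ s a s', 0 ≤ T s a s') (hπ : ∀ s a, 0 ≤ π s a) (τ : Fin H → S × A) :
    0 ≤ trajProb H hH s₀ T π τ := by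
  unfold trajProb
  refine mul_nonneg (mul_nonneg ?_ ?_) (Finset.prod_nonneg fun _ _ => hT _ _ _)
  · split <;> norm_num
  · exact Finset.prod_nonneg fun _ _ => hπ _ _

noncomputable def gstep [Fintype S] [Fintype A] (H : ℕ) (T'' : S → A → S → ℝ)
    (π : S → A → ℝ) (R : (Fin (H+1+1) → S × A) → ℝ) (τ' : Fin (H+1) → S × A) : ℝ :=
  ∑ p : S × A, T'' (τ' (Fin.last H)).1 (τ' (Fin.last H)).2 p.1 * π p.1 p.2 * R (Fin.snoc τ' p)

lemma pair_norm [Fintype S] [Fintype A] (T'' : S → A → S → ℝ) (π : S → A → ℝ)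
    (hT : ∀ s a, ∑ s', T'' s a s' = 1) (hπ : ∀ s, ∑ a, π s a = 1) (s : S) (a : A) :
    ∑ p : S × A, T'' s a p.1 * π p.1 p.2 = 1 := by
  rw [Fintype.sum_prod_type]
  calc ∑ s', ∑ a', T'' s a s' * π s' a' = ∑ s', T'' s a s' * ∑ a', π s' a' := by
        simp [Finset.mul_sum]
    _ = ∑ s', T'' s a s' := by simp [hπ]
    _ = 1 := hT s a

lemma gstep_mem [Fintype S] [Fintype A] (H : ℕ) (T'' : S → A → S → ℝ)
    (π : S → A → ℝ) (R : (Fin (H+1+1) → S × A) → ℝ) (Rmax : ℝ)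
    (hT : ∀ s a, (∀ s', 0 ≤ T'' s a s') ∧ ∑ s', T'' s a s' = 1)
    (hπ : ∀ s, (∀ a, 0 ≤ π s a) ∧ ∑ a, π s a = 1)
    (hR : ∀ τ, R τ ∈ Set.Icc 0 Rmax) (τ' : Fin (H+1) → S × A) :
    gstep H T'' π R τ' ∈ Set.Icc 0 Rmax := by
  constructor
  · exact Finset.sum_nonneg fun p _ => mul_nonneg
      (mul_nonneg ((hT _ _).1 _) ((hπ _).1 _)) (hR _).1
  · calc gstep H T'' π R τ'
        ≤ ∑ p : S × A, T'' (τ' (Fin.last H)).1 (τ' (Fin.last H)).2 p.1 * π p.1 p.2 * Rmax :=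
          Finset.sum_le_sum fun p _ => mul_le_mul_of_nonneg_left (hR _).2
            (mul_nonneg ((hT _ _).1 _) ((hπ _).1 _))
    _ = Rmax := by
          rw [← Finset.sum_mul, pair_norm T'' π (fun s a => (hT s a).2) (fun s => (hπ s).2),
            one_mul]

lemma gstep_diff [Fintype S] [Fintype A] (H : ℕ) (T That : S → A → S → ℝ)
    (π : S → A → ℝ) (R : (Fin (H+1+1) → S × A) → ℝ) (Rmax : ℝ) (hRmax : 0 ≤ Rmax)
    (hπ : ∀ s, (∀ a, 0 ≤ π s a) ∧ ∑ a, π s a = 1)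
    (hR : ∀ τ, R τ ∈ Set.Icc 0 Rmax) (τ' : Fin (H+1) → S × A) :
    gstep H That π R τ' - gstep H T π R τ' ≤
      Rmax * (∑ s', |T (τ' (Fin.last H)).1 (τ' (Fin.last H)).2 s'
        - That (τ' (Fin.last H)).1 (τ' (Fin.last H)).2 s'|) := by
  set s := (τ' (Fin.last H)).1
  set a := (τ' (Fin.last H)).2
  have h1 : gstep H That π R τ' - gstep H T π R τ' =
      ∑ p : S × A, (That s a p.1 - T s a p.1) * (π p.1 p.2 * R (Fin.snoc τ' p)) := by
    rw [gstep, gstep, ← Finset.sum_sub_distrib]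
    exact Finset.sum_congr rfl fun p _ => by ring
  rw [h1]
  calc ∑ p : S × A, (That s a p.1 - T s a p.1) * (π p.1 p.2 * R (Fin.snoc τ' p))
      ≤ ∑ p : S × A, |T s a p.1 - That s a p.1| * (π p.1 p.2 * Rmax) := by
        refine Finset.sum_le_sum fun p _ => ?_
        have h2 : That s a p.1 - T s a p.1 ≤ |T s a p.1 - That s a p.1| := by
          rw [abs_sub_comm]; exact le_abs_self _
        have h3 : 0 ≤ π p.1 p.2 * R (Fin.snoc τ' p) :=
          mul_nonneg ((hπ _).1 _) (hR _).1
        have h4 : π p.1 p.2 * R (Fin.snoc τ' p) ≤ π p.1 p.2 * Rmax :=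
          mul_le_mul_of_nonneg_left (hR _).2 ((hπ _).1 _)
        calc (That s a p.1 - T s a p.1) * (π p.1 p.2 * R (Fin.snoc τ' p))
            ≤ |T s a p.1 - That s a p.1| * (π p.1 p.2 * R (Fin.snoc τ' p)) :=
              mul_le_mul_of_nonneg_right h2 h3
          _ ≤ |T s a p.1 - That s a p.1| * (π p.1 p.2 * Rmax) :=
              mul_le_mul_of_nonneg_left h4 (abs_nonneg _)
    _ = Rmax * ∑ s', |T s a s' - That s a s'| := by
        rw [Fintype.sum_prod_type]
        calc ∑ s', ∑ a', |T s a s' - That s a s'| * (π s' a' * Rmax)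
            = ∑ s', |T s a s' - That s a s'| * Rmax := by
              refine Finset.sum_congr rfl fun s' _ => ?_
              have h5 : ∑ a', |T s a s' - That s a s'| * (π s' a' * Rmax)
                  = |T s a s' - That s a s'| * ((∑ a', π s' a') * Rmax) := by
                simp only [Finset.mul_sum, Finset.sum_mul]
              rw [h5, (hπ s').2, one_mul]
          _ = Rmax * ∑ s', |T s a s' - That s a s'| := by
              rw [← Finset.sum_mul, mul_comm]

lemma key [Fintype S] [Fintype A] [DecidableEq S] [DecidableEq A]
    (T That : S → A → S → ℝ) (π : S → A → ℝ) (Rmax : ℝ) (hRmax : 0 ≤ Rmax) (s₀ : S)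
    (hT : ∀ s a, (∀ s', 0 ≤ T s a s') ∧ ∑ s', T s a s' = 1)
    (hThat : ∀ s a, (∀ s', 0 ≤ That s a s') ∧ ∑ s', That s a s' = 1)
    (hπ : ∀ s, (∀ a, 0 ≤ π s a) ∧ ∑ a, π s a = 1) :
    ∀ (H : ℕ) (R : (Fin (H+1) → S × A) → ℝ), (∀ τ, R τ ∈ Set.Icc 0 Rmax) →
      ∑ τ : Fin (H+1) → S × A, trajProb (H+1) (Nat.succ_pos H) s₀ That π τ * R τ ≤
        (∑ τ : Fin (H+1) → S × A, trajProb (H+1) (Nat.succ_pos H) s₀ T π τ * R τ) +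
          Rmax * ∑ τ : Fin (H+1) → S × A, trajProb (H+1) (Nat.succ_pos H) s₀ That π τ *
            ∑ j : Fin H, (∑ s', |T (τ j.castSucc).1 (τ j.castSucc).2 s'
              - That (τ j.castSucc).1 (τ j.castSucc).2 s'|)
  | 0, R, hR => by
    simp [trajProb_def]
  | (H+1), R, hR => by
    have hsnoc := sum_snoc (X := S × A) (H+1)
    rw [hsnoc (fun τ => trajProb (H+1+1) (Nat.succ_pos (H+1)) s₀ That π τ * R τ),
        hsnoc (fun τ => trajProb (H+1+1) (Nat.succ_pos (H+1)) s₀ T π τ * R τ),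
        hsnoc (fun τ => trajProb (H+1+1) (Nat.succ_pos (H+1)) s₀ That π τ *
          ∑ j : Fin (H+1), (∑ s', |T (τ j.castSucc).1 (τ j.castSucc).2 s'
            - That (τ j.castSucc).1 (τ j.castSucc).2 s'|))]
    simp only [trajProb_snoc, Fin.snoc_castSucc]
    have hPhnn : ∀ τ' : Fin (H+1) → S × A,
        0 ≤ trajProb (H+1) (Nat.succ_pos H) s₀ That π τ' := fun τ' =>
      trajProb_nonneg _ _ _ _ _ (fun s a s' => (hThat s a).1 s') (fun s a => (hπ s).1 a) τ'
    have hinner : ∀ (T'' : S → A → S → ℝ) (τ' : Fin (H+1) → S × A) (c : ℝ),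
        ∑ p : S × A, c * T'' (τ' (Fin.last H)).1 (τ' (Fin.last H)).2 p.1 * π p.1 p.2 *
          R (Fin.snoc τ' p) = c * gstep H T'' π R τ' := by
      intro T'' τ' c
      rw [gstep, Finset.mul_sum]
      exact Finset.sum_congr rfl fun p _ => by ring
    have hinner2 : ∀ (τ' : Fin (H+1) → S × A) (c w : ℝ),
        ∑ p : S × A, c * That (τ' (Fin.last H)).1 (τ' (Fin.last H)).2 p.1 * π p.1 p.2 * w
          = c * w := by
      intro τ' c w
      have hn := pair_norm That π (fun s a => (hThat s a).2) (fun s => (hπ s).2)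
        (τ' (Fin.last H)).1 (τ' (Fin.last H)).2
      calc ∑ p : S × A, c * That (τ' (Fin.last H)).1 (τ' (Fin.last H)).2 p.1 * π p.1 p.2 * w
          = (∑ p : S × A, That (τ' (Fin.last H)).1 (τ' (Fin.last H)).2 p.1 * π p.1 p.2)
              * (c * w) := by
            rw [Finset.sum_mul]
            exact Finset.sum_congr rfl fun p _ => by ring
        _ = c * w := by rw [hn, one_mul]
    have e1 : (∑ τ' : Fin (H+1) → S × A, ∑ p : S × A,
        trajProb (H+1) (Nat.succ_pos H) s₀ That π τ' *
          That (τ' (Fin.last H)).1 (τ' (Fin.last H)).2 p.1 * π p.1 p.2 * R (Fin.snoc τ' p))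
        = ∑ τ' : Fin (H+1) → S × A,
            trajProb (H+1) (Nat.succ_pos H) s₀ That π τ' * gstep H That π R τ' :=
      Finset.sum_congr rfl fun τ' _ => hinner That τ' _
    have e2 : (∑ τ' : Fin (H+1) → S × A, ∑ p : S × A,
        trajProb (H+1) (Nat.succ_pos H) s₀ T π τ' *
          T (τ' (Fin.last H)).1 (τ' (Fin.last H)).2 p.1 * π p.1 p.2 * R (Fin.snoc τ' p))
        = ∑ τ' : Fin (H+1) → S × A,
            trajProb (H+1) (Nat.succ_pos H) s₀ T π τ' * gstep H T π R τ' :=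
      Finset.sum_congr rfl fun τ' _ => hinner T τ' _
    have e3 : (∑ τ' : Fin (H+1) → S × A, ∑ p : S × A,
        trajProb (H+1) (Nat.succ_pos H) s₀ That π τ' *
          That (τ' (Fin.last H)).1 (τ' (Fin.last H)).2 p.1 * π p.1 p.2 *
          ∑ j : Fin (H+1), (∑ s', |T (τ' j).1 (τ' j).2 s' - That (τ' j).1 (τ' j).2 s'|))
        = ∑ τ' : Fin (H+1) → S × A,
            trajProb (H+1) (Nat.succ_pos H) s₀ That π τ' *
              ∑ j : Fin (H+1), (∑ s', |T (τ' j).1 (τ' j).2 s' - That (τ' j).1 (τ' j).2 s'|) :=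
      Finset.sum_congr rfl fun τ' _ => hinner2 τ' _ _
    rw [e1, e2, e3]
    have hIH := key T That π Rmax hRmax s₀ hT hThat hπ H (gstep H T π R)
      (gstep_mem H T π R Rmax hT hπ hR)
    have hW : ∀ τ' : Fin (H+1) → S × A,
        (∑ j : Fin (H+1), (∑ s', |T (τ' j).1 (τ' j).2 s' - That (τ' j).1 (τ' j).2 s'|))
        = (∑ j : Fin H, (∑ s', |T (τ' j.castSucc).1 (τ' j.castSucc).2 s'
            - That (τ' j.castSucc).1 (τ' j.castSucc).2 s'|))
          + ∑ s', |T (τ' (Fin.last H)).1 (τ' (Fin.last H)).2 s'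
            - That (τ' (Fin.last H)).1 (τ' (Fin.last H)).2 s'| :=
      fun τ' => Fin.sum_univ_castSucc
        (f := fun j => ∑ s', |T (τ' j).1 (τ' j).2 s' - That (τ' j).1 (τ' j).2 s'|)
    have hstep : ∀ τ' : Fin (H+1) → S × A,
        trajProb (H+1) (Nat.succ_pos H) s₀ That π τ' * gstep H That π R τ'
        ≤ trajProb (H+1) (Nat.succ_pos H) s₀ That π τ' * gstep H T π R τ'
          + trajProb (H+1) (Nat.succ_pos H) s₀ That π τ' *
            (Rmax * ∑ s', |T (τ' (Fin.last H)).1 (τ' (Fin.last H)).2 s'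
              - That (τ' (Fin.last H)).1 (τ' (Fin.last H)).2 s'|) := by
      intro τ'
      have h1 := gstep_diff H T That π R Rmax hRmax hπ hR τ'
      have h2 := mul_le_mul_of_nonneg_left h1 (hPhnn τ')
      rw [mul_sub] at h2
      linarith
    have A1 : ∑ τ' : Fin (H+1) → S × A,
        trajProb (H+1) (Nat.succ_pos H) s₀ That π τ' * gstep H That π R τ'
        ≤ (∑ τ' : Fin (H+1) → S × A,
            trajProb (H+1) (Nat.succ_pos H) s₀ That π τ' * gstep H T π R τ')
          + ∑ τ' : Fin (H+1) → S × A,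
            trajProb (H+1) (Nat.succ_pos H) s₀ That π τ' *
              (Rmax * ∑ s', |T (τ' (Fin.last H)).1 (τ' (Fin.last H)).2 s'
                - That (τ' (Fin.last H)).1 (τ' (Fin.last H)).2 s'|) := by
      rw [← Finset.sum_add_distrib]
      exact Finset.sum_le_sum fun τ' _ => hstep τ'
    have A3 : Rmax * ∑ τ' : Fin (H+1) → S × A,
        trajProb (H+1) (Nat.succ_pos H) s₀ That π τ' *
          ∑ j : Fin (H+1), (∑ s', |T (τ' j).1 (τ' j).2 s' - That (τ' j).1 (τ' j).2 s'|)
        = Rmax * (∑ τ' : Fin (H+1) → S × A,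
            trajProb (H+1) (Nat.succ_pos H) s₀ That π τ' *
              ∑ j : Fin H, (∑ s', |T (τ' j.castSucc).1 (τ' j.castSucc).2 s'
                - That (τ' j.castSucc).1 (τ' j.castSucc).2 s'|))
          + ∑ τ' : Fin (H+1) → S × A,
              trajProb (H+1) (Nat.succ_pos H) s₀ That π τ' *
                (Rmax * ∑ s', |T (τ' (Fin.last H)).1 (τ' (Fin.last H)).2 s'
                  - That (τ' (Fin.last H)).1 (τ' (Fin.last H)).2 s'|) := by
      rw [Finset.mul_sum, Finset.mul_sum, ← Finset.sum_add_distrib]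
      refine Finset.sum_congr rfl fun τ' _ => ?_
      rw [hW τ']
      ring
    rw [A3]
    linarith

/-- Pessimistic transition model lower-bounds the value. -/
theorem pessimistic_transition_lower_bound [Fintype S] [Fintype A] [DecidableEq S]
    [DecidableEq A]
    (H : ℕ) (hH : 0 < H) (s₀ : S) (T That : S → A → S → ℝ) (π : S → A → ℝ)
    (Rtil : S → A → ℝ) (uT : S → A → ℝ) (Rmax : ℝ) (hRmax : 0 ≤ Rmax)
    (hT : ∀ s a, (∀ s', 0 ≤ T s a s') ∧ ∑ s', T s a s' = 1)
    (hThat : ∀ s a, (∀ s', 0 ≤ That s a s') ∧ ∑ s', That s a s' = 1)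
    (hπ : ∀ s, (∀ a, 0 ≤ π s a) ∧ ∑ a, π s a = 1)
    (huT : ∀ s a, 0 ≤ uT s a)
    (hRnonneg : ∀ s a, 0 ≤ Rtil s a)
    (hR : ∀ τ : Fin H → S × A, trajReward H Rtil τ ∈ Set.Icc 0 Rmax)
    (hcover : ∀ s a,
      (∃ τ : Fin H → S × A, 0 < trajProb H hH s₀ That π τ ∧ ∃ j, τ j = (s, a)) →
        tvDist T That s a * Rmax ≤ uT s a) :
    (∑ τ : Fin H → S × A, trajProb H hH s₀ That π τ *
        (trajReward H Rtil τ - ∑ j, uT (τ j).1 (τ j).2)) ≤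
      value H hH s₀ T π Rtil := by
  obtain ⟨H', rfl⟩ : ∃ H', H = H' + 1 := ⟨H - 1, by omega⟩
  have hprf : hH = Nat.succ_pos H' := rfl
  subst hprf
  unfold value
  have hPhnn : ∀ τ : Fin (H'+1) → S × A,
      0 ≤ trajProb (H'+1) (Nat.succ_pos H') s₀ That π τ := fun τ =>
    trajProb_nonneg _ _ _ _ _ (fun s a s' => (hThat s a).1 s') (fun s a => (hπ s).1 a) τ
  have hsplit : (∑ τ : Fin (H'+1) → S × A, trajProb (H'+1) (Nat.succ_pos H') s₀ That π τ *
      (trajReward (H'+1) Rtil τ - ∑ j, uT (τ j).1 (τ j).2))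
      = (∑ τ : Fin (H'+1) → S × A, trajProb (H'+1) (Nat.succ_pos H') s₀ That π τ *
          trajReward (H'+1) Rtil τ)
        - ∑ τ : Fin (H'+1) → S × A, trajProb (H'+1) (Nat.succ_pos H') s₀ That π τ *
          ∑ j, uT (τ j).1 (τ j).2 := by
    rw [← Finset.sum_sub_distrib]
    exact Finset.sum_congr rfl fun τ _ => mul_sub _ _ _
  rw [hsplit]
  have hkey := key T That π Rmax hRmax s₀ hT hThat hπ H' (trajReward (H'+1) Rtil) hR
  have hcmp : Rmax * ∑ τ : Fin (H'+1) → S × A,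
      trajProb (H'+1) (Nat.succ_pos H') s₀ That π τ *
        ∑ j : Fin H', (∑ s', |T (τ j.castSucc).1 (τ j.castSucc).2 s'
          - That (τ j.castSucc).1 (τ j.castSucc).2 s'|)
      ≤ ∑ τ : Fin (H'+1) → S × A, trajProb (H'+1) (Nat.succ_pos H') s₀ That π τ *
          ∑ j, uT (τ j).1 (τ j).2 := by
    rw [Finset.mul_sum]
    refine Finset.sum_le_sum fun τ _ => ?_
    rcases eq_or_lt_of_le (hPhnn τ) with h0 | hpos
    · rw [← h0]; simp
    · have hu : ∀ j : Fin (H'+1),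
          (∑ s', |T (τ j).1 (τ j).2 s' - That (τ j).1 (τ j).2 s'|) * Rmax
            ≤ uT (τ j).1 (τ j).2 := fun j => hcover _ _ ⟨τ, hpos, j, rfl⟩
      have hle : Rmax * ∑ j : Fin H', (∑ s', |T (τ j.castSucc).1 (τ j.castSucc).2 s'
            - That (τ j.castSucc).1 (τ j.castSucc).2 s'|)
          ≤ ∑ j : Fin (H'+1), uT (τ j).1 (τ j).2 := by
        rw [Fin.sum_univ_castSucc (f := fun j : Fin (H'+1) => uT (τ j).1 (τ j).2),
          Finset.mul_sum]
        have h1 : ∑ j : Fin H', Rmax * (∑ s', |T (τ j.castSucc).1 (τ j.castSucc).2 s'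
              - That (τ j.castSucc).1 (τ j.castSucc).2 s'|)
            ≤ ∑ j : Fin H', uT (τ j.castSucc).1 (τ j.castSucc).2 :=
          Finset.sum_le_sum fun j _ => by
            have := hu j.castSucc; linarith [this]
        have h2 : 0 ≤ uT (τ (Fin.last H')).1 (τ (Fin.last H')).2 := huT _ _
        linarith
      calc Rmax * (trajProb (H'+1) (Nat.succ_pos H') s₀ That π τ *
            ∑ j : Fin H', (∑ s', |T (τ j.castSucc).1 (τ j.castSucc).2 s'
              - That (τ j.castSucc).1 (τ j.castSucc).2 s'|))
          = trajProb (H'+1) (Nat.succ_pos H') s₀ That π τ *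
            (Rmax * ∑ j : Fin H', (∑ s', |T (τ j.castSucc).1 (τ j.castSucc).2 s'
              - That (τ j.castSucc).1 (τ j.castSucc).2 s'|)) := by ring
        _ ≤ _ := mul_le_mul_of_nonneg_left hle (le_of_lt hpos)
  linarith
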